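/- Let a, b, c be positive integers with c odd. Among the four parity classes for the pair (x, y) (i.e., the pair of residues (x mod 2, y mod 2)), at most two parity classes occur among all positive integer solutions (x, y, z) of a^x + b^y = c^z. -/
import Mathlib

/- ## Auxiliary lemmas -/

/-- Group kill lemma: two relations `u^D = η^S`, `u^D' = η^S'` with `η² = 1`, `η ≠ 1`
and `S*D' - S'*D` odd give a contradiction. -/
lemma stmt2_eta_key {G : Type*} [CommGroup G] {η u : G} (hη2 : η ^ (2:ℕ) = 1) (hη1 : η ≠ 1)
    {D S D' S' : ℤ} (h1 : u ^ D = η ^ S) (h2 : u ^ D' = η ^ S')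
    (hodd : Odd (S * D' - S' * D)) : False := by
  have e1 : η ^ (S * D') = η ^ (S' * D) := by
    calc η ^ (S * D') = (η ^ S) ^ D' := by rw [zpow_mul]
    _ = (u ^ D) ^ D' := by rw [h1]
    _ = (u ^ D') ^ D := by rw [← zpow_mul, mul_comm, zpow_mul]
    _ = (η ^ S') ^ D := by rw [h2]
    _ = η ^ (S' * D) := by rw [zpow_mul]
  have e2 : η ^ (S * D' - S' * D) = 1 := by
    rw [zpow_sub, e1]
    simp
  obtain ⟨k, hk⟩ := hodd
  have e3 : η ^ (S * D' - S' * D) = η := by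
    rw [hk, zpow_add, zpow_one, zpow_mul]
    norm_cast
    rw [hη2, one_zpow, one_mul]
  exact hη1 (by rw [← e3, e2])

/-- Parity selection over `ZMod 2`. -/
lemma stmt2_select : ∀ (E1 F1 E2 F2 E3 F3 : ZMod 2),
    ¬(E1 = E2 ∧ F1 = F2) → ¬(E1 = E3 ∧ F1 = F3) → ¬(E2 = E3 ∧ F2 = F3) →
    ((F2 - F1) * (E1*F3 - E3*F1) - (F3 - F1) * (E1*F2 - E2*F1) = 1 ∨
    (F2 - F1) * (E2*F3 - E3*F2) - (F3 - F2) * (E1*F2 - E2*F1) = 1 ∨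
    (F3 - F1) * (E2*F3 - E3*F2) - (F3 - F2) * (E1*F3 - E3*F1) = 1) := by
  decide

lemma stmt2_odd_of_zmod2 {n : ℤ} (h : ((n : ℤ) : ZMod 2) = 1) : Odd n := by
  rw [← Int.not_even_iff_odd]
  intro he
  obtain ⟨m, hm⟩ := he
  rw [hm] at h
  push_cast at h
  have hz : ((m : ZMod 2) + m) = 0 := by
    have h2 : (2 : ZMod 2) = 0 := by decide
    rw [← two_mul, h2, zero_mul]
  rw [hz] at h
  exact absurd h (by decide)

lemma stmt2_distinct_bridge {x1 y1 x2 y2 : ℕ} (h : (x1 % 2, y1 % 2) ≠ (x2 % 2, y2 % 2)) :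
    ¬((x1 : ZMod 2) = (x2 : ZMod 2) ∧ (y1 : ZMod 2) = (y2 : ZMod 2)) := by
  rintro ⟨hx, hy⟩
  apply h
  have bx : x1 % 2 = x2 % 2 := by
    have hx' : ((x1 % 2 : ℕ) : ZMod 2) = ((x2 % 2 : ℕ) : ZMod 2) := by
      rwa [ZMod.natCast_mod, ZMod.natCast_mod]
    have h1 : x1 % 2 < 2 := Nat.mod_lt _ (by norm_num)
    have h2 : x2 % 2 < 2 := Nat.mod_lt _ (by norm_num)
    have := congrArg ZMod.val hx'
    rwa [ZMod.val_cast_of_lt h1, ZMod.val_cast_of_lt h2] at this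
  have by' : y1 % 2 = y2 % 2 := by
    have hy' : ((y1 % 2 : ℕ) : ZMod 2) = ((y2 % 2 : ℕ) : ZMod 2) := by
      rwa [ZMod.natCast_mod, ZMod.natCast_mod]
    have h1 : y1 % 2 < 2 := Nat.mod_lt _ (by norm_num)
    have h2 : y2 % 2 < 2 := Nat.mod_lt _ (by norm_num)
    have := congrArg ZMod.val hy'
    rwa [ZMod.val_cast_of_lt h1, ZMod.val_cast_of_lt h2] at this
  rw [bx, by']

/-- Branch 1: some prime `p ∣ c` divides neither `a` nor `b`. -/
lemma stmt2_branch1 {a b c p : ℕ} (hp : p.Prime) (hp2 : p ≠ 2) (hpc : p ∣ c)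
    (hpa : ¬ p ∣ a) (hpb : ¬ p ∣ b)
    {x1 y1 z1 x2 y2 z2 x3 y3 z3 : ℕ}
    (hz1 : 0 < z1) (hz2 : 0 < z2) (hz3 : 0 < z3)
    (e1 : a ^ x1 + b ^ y1 = c ^ z1) (e2 : a ^ x2 + b ^ y2 = c ^ z2)
    (e3 : a ^ x3 + b ^ y3 = c ^ z3)
    (d12 : (x1 % 2, y1 % 2) ≠ (x2 % 2, y2 % 2))
    (d13 : (x1 % 2, y1 % 2) ≠ (x3 % 2, y3 % 2))
    (d23 : (x2 % 2, y2 % 2) ≠ (x3 % 2, y3 % 2)) : False := by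
  haveI : Fact p.Prime := ⟨hp⟩
  have ha0 : (a : ZMod p) ≠ 0 := by
    rw [Ne, ZMod.natCast_eq_zero_iff]; exact hpa
  have hb0 : (b : ZMod p) ≠ 0 := by
    rw [Ne, ZMod.natCast_eq_zero_iff]; exact hpb
  set u : (ZMod p)ˣ := Units.mk0 _ ha0 with hu
  set w : (ZMod p)ˣ := Units.mk0 _ hb0 with hw
  set η : (ZMod p)ˣ := -1 with hη
  have rel : ∀ x y z : ℕ, 0 < z → a ^ x + b ^ y = c ^ z → u ^ x = η * w ^ y := by
    intro x y z hz e
    have hc0 : (c : ZMod p) = 0 := (ZMod.natCast_eq_zero_iff c p).mpr hpc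
    have hcast : (a : ZMod p) ^ x + (b : ZMod p) ^ y = 0 := by
      have hcc := congrArg (Nat.cast : ℕ → ZMod p) e
      push_cast at hcc
      rw [hcc, hc0, zero_pow hz.ne']
    apply Units.ext
    have hv1 : ((u ^ x : (ZMod p)ˣ) : ZMod p) = (a : ZMod p) ^ x := by
      rw [hu, Units.val_pow_eq_pow_val, Units.val_mk0]
    have hv2 : ((η * w ^ y : (ZMod p)ˣ) : ZMod p) = -((b : ZMod p) ^ y) := by
      rw [hη, hw, Units.val_mul, Units.val_pow_eq_pow_val, Units.val_neg, Units.val_one,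
        Units.val_mk0, neg_one_mul]
    rw [hv1, hv2]
    linear_combination hcast
  have r1 := rel x1 y1 z1 hz1 e1
  have r2 := rel x2 y2 z2 hz2 e2
  have r3 := rel x3 y3 z3 hz3 e3
  have hη2 : η ^ (2:ℕ) = 1 := by rw [hη]; exact neg_one_sq
  have pair : ∀ {x y x' y' : ℕ}, u ^ x = η * w ^ y → u ^ x' = η * w ^ y' →
      u ^ (((x * y' : ℕ) : ℤ) - ((x' * y : ℕ) : ℤ)) = η ^ (((y' : ℕ) : ℤ) - ((y : ℕ) : ℤ)) := by
    intro x y x' y' h h'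
    have k1 : u ^ (x * y') = η ^ y' * w ^ (y * y') := by
      rw [pow_mul, h, mul_pow, ← pow_mul]
    have k2 : u ^ (x' * y) = η ^ y * w ^ (y * y') := by
      rw [pow_mul, h', mul_pow, ← pow_mul, mul_comm y' y]
    have k3 : u ^ (x * y') * η ^ y = u ^ (x' * y) * η ^ y' := by
      rw [k1, k2]
      simp [mul_comm, mul_assoc, mul_left_comm]
    have cast3 : u ^ ((x * y' : ℕ) : ℤ) * η ^ ((y : ℕ) : ℤ)
        = u ^ ((x' * y : ℕ) : ℤ) * η ^ ((y' : ℕ) : ℤ) := by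
      rw [zpow_natCast, zpow_natCast, zpow_natCast, zpow_natCast]; exact k3
    have main : u ^ (((x * y' : ℕ) : ℤ) - ((x' * y : ℕ) : ℤ)) * (u ^ ((x' * y : ℕ) : ℤ) * η ^ ((y : ℕ) : ℤ))
        = η ^ (((y' : ℕ) : ℤ) - ((y : ℕ) : ℤ)) * (u ^ ((x' * y : ℕ) : ℤ) * η ^ ((y : ℕ) : ℤ)) := by
      calc u ^ (((x * y' : ℕ) : ℤ) - ((x' * y : ℕ) : ℤ)) * (u ^ ((x' * y : ℕ) : ℤ) * η ^ ((y : ℕ) : ℤ))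
          = (u ^ (((x * y' : ℕ) : ℤ) - ((x' * y : ℕ) : ℤ)) * u ^ ((x' * y : ℕ) : ℤ)) * η ^ ((y : ℕ) : ℤ) := by
            rw [mul_assoc]
        _ = u ^ ((x * y' : ℕ) : ℤ) * η ^ ((y : ℕ) : ℤ) := by rw [← zpow_add, sub_add_cancel]
        _ = u ^ ((x' * y : ℕ) : ℤ) * η ^ ((y' : ℕ) : ℤ) := cast3
        _ = u ^ ((x' * y : ℕ) : ℤ) * (η ^ (((y' : ℕ) : ℤ) - ((y : ℕ) : ℤ)) * η ^ ((y : ℕ) : ℤ)) := by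
            rw [← zpow_add, sub_add_cancel]
        _ = η ^ (((y' : ℕ) : ℤ) - ((y : ℕ) : ℤ)) * (u ^ ((x' * y : ℕ) : ℤ) * η ^ ((y : ℕ) : ℤ)) := by
            simp [mul_comm, mul_assoc, mul_left_comm]
    exact mul_right_cancel main
  have h12 := pair r1 r2
  have h13 := pair r1 r3
  have h23 := pair r2 r3
  have hη1 : η ≠ 1 := by
    rw [hη]
    intro hcon
    have hval : ((-1 : (ZMod p)ˣ) : ZMod p) = ((1 : (ZMod p)ˣ) : ZMod p) := by rw [hcon]
    rw [Units.val_neg, Units.val_one] at hval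
    have h2 : ((2 : ℕ) : ZMod p) = 0 := by push_cast; linear_combination -hval
    rw [ZMod.natCast_eq_zero_iff] at h2
    exact hp2 ((Nat.prime_dvd_prime_iff_eq hp Nat.prime_two).mp h2)
  have hsel := stmt2_select (x1 : ZMod 2) (y1 : ZMod 2) (x2 : ZMod 2) (y2 : ZMod 2)
    (x3 : ZMod 2) (y3 : ZMod 2)
    (stmt2_distinct_bridge d12) (stmt2_distinct_bridge d13) (stmt2_distinct_bridge d23)
  rcases hsel with hs | hs | hs
  · exact stmt2_eta_key hη2 hη1 h12 h13 (stmt2_odd_of_zmod2 (by push_cast; linear_combination hs))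
  · exact stmt2_eta_key hη2 hη1 h12 h23 (stmt2_odd_of_zmod2 (by push_cast; linear_combination hs))
  · exact stmt2_eta_key hη2 hη1 h13 h23 (stmt2_odd_of_zmod2 (by push_cast; linear_combination hs))

/-- If `x·v_p(a) < y·v_p(b)` then `v_p(a^x + b^y) = x·v_p(a)`. -/
lemma stmt2_val_lt {p a b x y : ℕ} (hp : p.Prime) (ha : a ≠ 0) (hb : b ≠ 0)
    (h : x * a.factorization p < y * b.factorization p) :
    (a ^ x + b ^ y).factorization p = x * a.factorization p := by
  have hax : a ^ x ≠ 0 := pow_ne_zero _ ha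
  have hby : b ^ y ≠ 0 := pow_ne_zero _ hb
  have hs : a ^ x + b ^ y ≠ 0 := by positivity
  have fx : (a ^ x).factorization p = x * a.factorization p := by
    rw [Nat.factorization_pow]; simp
  have fy : (b ^ y).factorization p = y * b.factorization p := by
    rw [Nat.factorization_pow]; simp
  have d1 : p ^ (x * a.factorization p) ∣ a ^ x :=
    (hp.pow_dvd_iff_le_factorization hax).mpr (by rw [fx])
  have d2 : p ^ (x * a.factorization p) ∣ b ^ y :=
    (hp.pow_dvd_iff_le_factorization hby).mpr (by rw [fy]; omega)
  have dl : x * a.factorization p ≤ (a ^ x + b ^ y).factorization p :=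
    (hp.pow_dvd_iff_le_factorization hs).mp (dvd_add d1 d2)
  have du : ¬ (x * a.factorization p + 1 ≤ (a ^ x + b ^ y).factorization p) := by
    intro hle
    have dsum : p ^ (x * a.factorization p + 1) ∣ a ^ x + b ^ y :=
      (hp.pow_dvd_iff_le_factorization hs).mpr hle
    have db : p ^ (x * a.factorization p + 1) ∣ b ^ y :=
      (hp.pow_dvd_iff_le_factorization hby).mpr (by rw [fy]; omega)
    have da : p ^ (x * a.factorization p + 1) ∣ a ^ x := by
      have : a ^ x = (a ^ x + b ^ y) - b ^ y := by omega
      rw [this]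
      exact Nat.dvd_sub dsum db
    rw [hp.pow_dvd_iff_le_factorization hax, fx] at da
    omega
  omega

/-- If `x·v_p(a) = y·v_p(b)` then `x·v_p(a) ≤ v_p(a^x + b^y)`. -/
lemma stmt2_val_ge {p a b x y : ℕ} (hp : p.Prime) (ha : a ≠ 0) (hb : b ≠ 0)
    (h : x * a.factorization p = y * b.factorization p) :
    x * a.factorization p ≤ (a ^ x + b ^ y).factorization p := by
  have hax : a ^ x ≠ 0 := pow_ne_zero _ ha
  have hby : b ^ y ≠ 0 := pow_ne_zero _ hb
  have hs : a ^ x + b ^ y ≠ 0 := by positivity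
  have fx : (a ^ x).factorization p = x * a.factorization p := by
    rw [Nat.factorization_pow]; simp
  have fy : (b ^ y).factorization p = y * b.factorization p := by
    rw [Nat.factorization_pow]; simp
  have d1 : p ^ (x * a.factorization p) ∣ a ^ x :=
    (hp.pow_dvd_iff_le_factorization hax).mpr (by rw [fx])
  have d2 : p ^ (x * a.factorization p) ∣ b ^ y :=
    (hp.pow_dvd_iff_le_factorization hby).mpr (by rw [fy]; omega)
  exact (hp.pow_dvd_iff_le_factorization hs).mp (dvd_add d1 d2)

/-- Trichotomy for a solution at a prime. -/
lemma stmt2_sol_tri {p a b c x y z : ℕ} (hp : p.Prime) (ha : a ≠ 0) (hb : b ≠ 0) (hc : c ≠ 0)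
    (e : a ^ x + b ^ y = c ^ z) :
    (x * a.factorization p < y * b.factorization p → z * c.factorization p = x * a.factorization p) ∧
    (y * b.factorization p < x * a.factorization p → z * c.factorization p = y * b.factorization p) ∧
    (x * a.factorization p = y * b.factorization p → x * a.factorization p ≤ z * c.factorization p) := by
  have fz : (c ^ z).factorization p = z * c.factorization p := by
    rw [Nat.factorization_pow]; simp
  refine ⟨fun h => ?_, fun h => ?_, fun h => ?_⟩
  · rw [← fz, ← e]; exact stmt2_val_lt hp ha hb h
  · rw [← fz, ← e, add_comm]; exact stmt2_val_lt hp hb ha h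
  · rw [← fz, ← e]; exact stmt2_val_ge hp ha hb h

/-- F2: some prime of `c` has `z·v_p(c) ≠ x·v_p(a)`. -/
lemma stmt2_exists_bad_a {a b c x y z : ℕ} (ha : a ≠ 0) (hb : 0 < b) (hz : 0 < z)
    (e : a ^ x + b ^ y = c ^ z)
    (hall : ∀ p : ℕ, p.Prime → p ∣ c → z * c.factorization p = x * a.factorization p) :
    False := by
  have hc0 : c ≠ 0 := by
    rintro rfl
    rw [zero_pow hz.ne'] at e
    have : 0 < b ^ y := by positivity
    omega
  have hdvd : c ^ z ∣ a ^ x := by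
    rw [← Nat.factorization_le_iff_dvd (pow_ne_zero _ hc0) (pow_ne_zero _ ha),
      Nat.factorization_pow, Nat.factorization_pow]
    intro q
    simp only [Finsupp.smul_apply, smul_eq_mul]
    by_cases hq : q.Prime
    · by_cases hqc : q ∣ c
      · rw [hall q hq hqc]
      · rw [Nat.factorization_eq_zero_of_not_dvd hqc]; omega
    · rw [Nat.factorization_eq_zero_of_not_prime _ hq]; omega
  have hle : c ^ z ≤ a ^ x := Nat.le_of_dvd (by positivity) hdvd
  have : 0 < b ^ y := by positivity
  omega

/-- No two distinct proportional solutions. -/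
lemma stmt2_no_prop {a b c x1 y1 z1 x2 y2 z2 : ℕ} (ha : 0 < a) (hb : 0 < b) (hc : 2 ≤ c)
    (hx1 : 0 < x1) (hy1 : 0 < y1) (hz1 : 0 < z1) (hz12 : z1 < z2)
    (e1 : a ^ x1 + b ^ y1 = c ^ z1) (e2 : a ^ x2 + b ^ y2 = c ^ z2)
    (hxz : x1 * z2 = x2 * z1) (hyz : y1 * z2 = y2 * z1) : False := by
  have hx12 : x1 ≤ x2 := by
    have h1 : x1 * z1 ≤ x2 * z1 := by
      calc x1 * z1 ≤ x1 * z2 := Nat.mul_le_mul_left _ hz12.le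
      _ = x2 * z1 := hxz
    exact Nat.le_of_mul_le_mul_right h1 hz1
  have hy12 : y1 < y2 := by
    have h1 : y1 * z1 < y2 * z1 := by
      calc y1 * z1 < y1 * z2 := Nat.mul_lt_mul_of_le_of_lt (le_refl y1) hz12 hy1
      _ = y2 * z1 := hyz
    exact Nat.lt_of_mul_lt_mul_right h1
  have hdz : (x2 - x1) * z1 = x1 * (z2 - z1) := by
    rw [Nat.sub_mul, ← hxz, Nat.mul_sub]
  have hez : (y2 - y1) * z1 = y1 * (z2 - z1) := by
    rw [Nat.sub_mul, ← hyz, Nat.mul_sub]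
  have hax : a ^ x1 ≤ c ^ z1 := by omega
  have hbx : b ^ y1 < c ^ z1 := by
    have : 0 < a ^ x1 := by positivity
    omega
  have key1 : a ^ (x2 - x1) ≤ c ^ (z2 - z1) := by
    by_contra hcon
    push_neg at hcon
    have h1 : (c ^ (z2 - z1)) ^ z1 < (a ^ (x2 - x1)) ^ z1 :=
      Nat.pow_lt_pow_left hcon hz1.ne'
    have h2 : (a ^ (x2 - x1)) ^ z1 = (a ^ x1) ^ (z2 - z1) := by
      rw [← pow_mul, ← pow_mul, hdz, Nat.mul_comm x1 (z2 - z1)]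
    have h3 : (a ^ x1) ^ (z2 - z1) ≤ (c ^ z1) ^ (z2 - z1) := Nat.pow_le_pow_left hax _
    have h4 : (c ^ z1) ^ (z2 - z1) = (c ^ (z2 - z1)) ^ z1 := by
      rw [← pow_mul, ← pow_mul, Nat.mul_comm]
    omega
  have key2 : b ^ (y2 - y1) < c ^ (z2 - z1) := by
    by_contra hcon
    push_neg at hcon
    have h1 : (c ^ (z2 - z1)) ^ z1 ≤ (b ^ (y2 - y1)) ^ z1 := Nat.pow_le_pow_left hcon _
    have h2 : (b ^ (y2 - y1)) ^ z1 = (b ^ y1) ^ (z2 - z1) := by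
      rw [← pow_mul, ← pow_mul, hez, Nat.mul_comm y1 (z2 - z1)]
    have h3 : (b ^ y1) ^ (z2 - z1) < (c ^ z1) ^ (z2 - z1) :=
      Nat.pow_lt_pow_left hbx (by omega)
    have h4 : (c ^ z1) ^ (z2 - z1) = (c ^ (z2 - z1)) ^ z1 := by
      rw [← pow_mul, ← pow_mul, Nat.mul_comm]
    omega
  have hsplit1 : a ^ x2 = a ^ x1 * a ^ (x2 - x1) := by
    rw [← pow_add]; congr 1; omega
  have hsplit2 : b ^ y2 = b ^ y1 * b ^ (y2 - y1) := by
    rw [← pow_add]; congr 1; omega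
  have hsplit3 : c ^ z2 = c ^ z1 * c ^ (z2 - z1) := by
    rw [← pow_add]; congr 1; omega
  have hlt : a ^ x2 + b ^ y2 < c ^ z2 := by
    rw [hsplit1, hsplit2, hsplit3, ← e1, Nat.add_mul]
    have t1 : a ^ x1 * a ^ (x2 - x1) ≤ a ^ x1 * c ^ (z2 - z1) := Nat.mul_le_mul_left _ key1
    have t2 : b ^ y1 * b ^ (y2 - y1) < b ^ y1 * c ^ (z2 - z1) :=
      Nat.mul_lt_mul_of_le_of_lt (le_refl _) key2 (by positivity)
    omega
  omega

/-- Branch 2 core: three sorted solutions (by ratio x/y) with strict min<max, all primes of c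
dividing both a and b. -/
lemma stmt2_core {a b c : ℕ} (ha : 0 < a) (hb : 0 < b) (hc2 : 2 ≤ c)
    {x1 y1 z1 x2 y2 z2 x3 y3 z3 : ℕ}
    (hx1 : 0 < x1) (hy1 : 0 < y1) (hz1 : 0 < z1)
    (hx2 : 0 < x2) (hy2 : 0 < y2) (hz2 : 0 < z2)
    (hx3 : 0 < x3) (hy3 : 0 < y3) (hz3 : 0 < z3)
    (e1 : a ^ x1 + b ^ y1 = c ^ z1) (e2 : a ^ x2 + b ^ y2 = c ^ z2)
    (e3 : a ^ x3 + b ^ y3 = c ^ z3)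
    (hdeg : ∀ p : ℕ, p.Prime → p ∣ c → p ∣ a ∧ p ∣ b)
    (hAB : x1 * y2 ≤ x2 * y1) (hBC : x2 * y3 ≤ x3 * y2) (hAC : x1 * y3 < x3 * y1)
    (n12 : (x1, y1, z1) ≠ (x2, y2, z2)) (n23 : (x2, y2, z2) ≠ (x3, y3, z3)) : False := by
  have hc0 : c ≠ 0 := by omega
  -- F2 for solution 1
  obtain ⟨p, hp, hpc, hne1⟩ :
      ∃ p, p.Prime ∧ p ∣ c ∧ ¬(z1 * c.factorization p = x1 * a.factorization p) := by
    by_contra hcon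
    push_neg at hcon
    exact stmt2_exists_bad_a ha.ne' hb hz1 e1 hcon
  -- F3 for solution 3
  obtain ⟨q, hq, hqc, hne3⟩ :
      ∃ q, q.Prime ∧ q ∣ c ∧ ¬(z3 * c.factorization q = y3 * b.factorization q) := by
    by_contra hcon
    push_neg at hcon
    exact stmt2_exists_bad_a (x := y3) (y := x3) hb.ne' ha hz3 (by rw [add_comm]; exact e3) hcon
  set r := a.factorization p with hrdef
  set s := b.factorization p with hsdef
  set t := c.factorization p with htdef
  set r' := a.factorization q with hr'def
  set s' := b.factorization q with hs'def
  set t' := c.factorization q with ht'def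
  have hrpos : 0 < r := hp.factorization_pos_of_dvd ha.ne' (hdeg p hp hpc).1
  have hspos : 0 < s := hp.factorization_pos_of_dvd hb.ne' (hdeg p hp hpc).2
  have htpos : 0 < t := hp.factorization_pos_of_dvd hc0 hpc
  have hr'pos : 0 < r' := hq.factorization_pos_of_dvd ha.ne' (hdeg q hq hqc).1
  have hs'pos : 0 < s' := hq.factorization_pos_of_dvd hb.ne' (hdeg q hq hqc).2
  have ht'pos : 0 < t' := hq.factorization_pos_of_dvd hc0 hqc
  have T1p := stmt2_sol_tri (p := p) hp ha.ne' hb.ne' hc0 e1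
  have T2p := stmt2_sol_tri (p := p) hp ha.ne' hb.ne' hc0 e2
  have T3p := stmt2_sol_tri (p := p) hp ha.ne' hb.ne' hc0 e3
  have T1q := stmt2_sol_tri (p := q) hq ha.ne' hb.ne' hc0 e1
  have T2q := stmt2_sol_tri (p := q) hq ha.ne' hb.ne' hc0 e2
  have T3q := stmt2_sol_tri (p := q) hq ha.ne' hb.ne' hc0 e3
  -- from hne1 : ratio1 ≥ θ_p
  have h1p : y1 * s ≤ x1 * r := by
    by_contra hcon
    push_neg at hcon
    exact hne1 (T1p.1 hcon)
  -- from hne3 : ratio3 ≤ θ_q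
  have h3q : x3 * r' ≤ y3 * s' := by
    by_contra hcon
    push_neg at hcon
    exact hne3 (T3q.2.1 hcon)
  -- solution 1 is of A type at q
  have hA1q : z1 * t' = x1 * r' := by
    apply T1q.1
    have step : (x1 * r') * y3 < (y1 * s') * y3 := by
      calc (x1 * r') * y3 = r' * (x1 * y3) := by ring
      _ < r' * (x3 * y1) := Nat.mul_lt_mul_of_le_of_lt (le_refl r') hAC hr'pos
      _ = (x3 * r') * y1 := by ring
      _ ≤ (y3 * s') * y1 := Nat.mul_le_mul_right _ h3q
      _ = (y1 * s') * y3 := by ring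
    exact Nat.lt_of_mul_lt_mul_right step
  -- solution 3 is of B type at p
  have hB3p : z3 * t = y3 * s := by
    apply T3p.2.1
    have step : (y3 * s) * x1 < (x3 * r) * x1 := by
      calc (y3 * s) * x1 = s * (x1 * y3) := by ring
      _ < s * (x3 * y1) := Nat.mul_lt_mul_of_le_of_lt (le_refl s) hAC hspos
      _ = (y1 * s) * x3 := by ring
      _ ≤ (x1 * r) * x3 := Nat.mul_le_mul_right _ h1p
      _ = (x3 * r) * x1 := by ring
    exact Nat.lt_of_mul_lt_mul_right step
  by_cases hab : x1 * y2 = x2 * y1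
  · -- subcase α : ratio1 = ratio2 (< ratio3); both A at q, proportional, PROP kills
    have h2C : x2 * y3 < x3 * y2 := by
      have step : x1 * (x2 * y3) < x1 * (x3 * y2) := by
        calc x1 * (x2 * y3) = x2 * (x1 * y3) := by ring
        _ < x2 * (x3 * y1) := Nat.mul_lt_mul_of_le_of_lt (le_refl x2) hAC hx2
        _ = x3 * (x2 * y1) := by ring
        _ = x3 * (x1 * y2) := by rw [hab]
        _ = x1 * (x3 * y2) := by ring
      exact Nat.lt_of_mul_lt_mul_left step
    have hA2q : z2 * t' = x2 * r' := by
      apply T2q.1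
      have step : (x2 * r') * y3 < (y2 * s') * y3 := by
        calc (x2 * r') * y3 = r' * (x2 * y3) := by ring
        _ < r' * (x3 * y2) := Nat.mul_lt_mul_of_le_of_lt (le_refl r') h2C hr'pos
        _ = (x3 * r') * y2 := by ring
        _ ≤ (y3 * s') * y2 := Nat.mul_le_mul_right _ h3q
        _ = (y2 * s') * y3 := by ring
      exact Nat.lt_of_mul_lt_mul_right step
    have hxz : x1 * z2 = x2 * z1 := by
      have step : t' * (x1 * z2) = t' * (x2 * z1) := by
        calc t' * (x1 * z2) = x1 * (z2 * t') := by ring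
        _ = x1 * (x2 * r') := by rw [hA2q]
        _ = x2 * (x1 * r') := by ring
        _ = x2 * (z1 * t') := by rw [hA1q]
        _ = t' * (x2 * z1) := by ring
      exact Nat.eq_of_mul_eq_mul_left ht'pos step
    have hyz : y1 * z2 = y2 * z1 := by
      have step : x1 * (y1 * z2) = x1 * (y2 * z1) := by
        calc x1 * (y1 * z2) = y1 * (x1 * z2) := by ring
        _ = y1 * (x2 * z1) := by rw [hxz]
        _ = (x2 * y1) * z1 := by ring
        _ = (x1 * y2) * z1 := by rw [hab]
        _ = x1 * (y2 * z1) := by ring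
      exact Nat.eq_of_mul_eq_mul_left hx1 step
    rcases Nat.lt_trichotomy z1 z2 with h | h | h
    · exact stmt2_no_prop ha hb hc2 hx1 hy1 hz1 h e1 e2 hxz hyz
    · subst h
      apply n12
      have hxeq : x1 = x2 := Nat.eq_of_mul_eq_mul_right hz1 hxz
      have hyeq : y1 = y2 := Nat.eq_of_mul_eq_mul_right hz1 hyz
      rw [hxeq, hyeq]
    · exact stmt2_no_prop ha hb hc2 hx2 hy2 hz2 h e2 e1 hxz.symm hyz.symm
  · have hab' : x1 * y2 < x2 * y1 := lt_of_le_of_ne hAB hab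
    by_cases hbc : x2 * y3 = x3 * y2
    · -- subcase β : ratio2 = ratio3 (> ratio1); both B at p, proportional, PROP kills
      have hB2p : z2 * t = y2 * s := by
        apply T2p.2.1
        have step : (y2 * s) * x1 < (x2 * r) * x1 := by
          calc (y2 * s) * x1 = s * (x1 * y2) := by ring
          _ < s * (x2 * y1) := Nat.mul_lt_mul_of_le_of_lt (le_refl s) hab' hspos
          _ = (y1 * s) * x2 := by ring
          _ ≤ (x1 * r) * x2 := Nat.mul_le_mul_right _ h1p
          _ = (x2 * r) * x1 := by ring
        exact Nat.lt_of_mul_lt_mul_right step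
      have hyz : y2 * z3 = y3 * z2 := by
        have step : t * (y2 * z3) = t * (y3 * z2) := by
          calc t * (y2 * z3) = y2 * (z3 * t) := by ring
          _ = y2 * (y3 * s) := by rw [hB3p]
          _ = y3 * (y2 * s) := by ring
          _ = y3 * (z2 * t) := by rw [hB2p]
          _ = t * (y3 * z2) := by ring
        exact Nat.eq_of_mul_eq_mul_left htpos step
      have hxz : x2 * z3 = x3 * z2 := by
        have step : y2 * (x2 * z3) = y2 * (x3 * z2) := by
          calc y2 * (x2 * z3) = x2 * (y2 * z3) := by ring
          _ = x2 * (y3 * z2) := by rw [hyz]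
          _ = (x2 * y3) * z2 := by ring
          _ = (x3 * y2) * z2 := by rw [hbc]
          _ = y2 * (x3 * z2) := by ring
        exact Nat.eq_of_mul_eq_mul_left hy2 step
      rcases Nat.lt_trichotomy z2 z3 with h | h | h
      · exact stmt2_no_prop ha hb hc2 hx2 hy2 hz2 h e2 e3 hxz hyz
      · subst h
        apply n23
        have hxeq : x2 = x3 := Nat.eq_of_mul_eq_mul_right hz2 hxz
        have hyeq : y2 = y3 := Nat.eq_of_mul_eq_mul_right hz2 hyz
        rw [hxeq, hyeq]
      · exact stmt2_no_prop ha hb hc2 hx3 hy3 hz3 h e3 e2 hxz.symm hyz.symm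
    · -- subcase γ : strict everywhere
      have hbc' : x2 * y3 < x3 * y2 := lt_of_le_of_ne hBC hbc
      have hA2q : z2 * t' = x2 * r' := by
        apply T2q.1
        have step : (x2 * r') * y3 < (y2 * s') * y3 := by
          calc (x2 * r') * y3 = r' * (x2 * y3) := by ring
          _ < r' * (x3 * y2) := Nat.mul_lt_mul_of_le_of_lt (le_refl r') hbc' hr'pos
          _ = (x3 * r') * y2 := by ring
          _ ≤ (y3 * s') * y2 := Nat.mul_le_mul_right _ h3q
          _ = (y2 * s') * y3 := by ring
        exact Nat.lt_of_mul_lt_mul_right step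
      have hB2p : z2 * t = y2 * s := by
        apply T2p.2.1
        have step : (y2 * s) * x1 < (x2 * r) * x1 := by
          calc (y2 * s) * x1 = s * (x1 * y2) := by ring
          _ < s * (x2 * y1) := Nat.mul_lt_mul_of_le_of_lt (le_refl s) hab' hspos
          _ = (y1 * s) * x2 := by ring
          _ ≤ (x1 * r) * x2 := Nat.mul_le_mul_right _ h1p
          _ = (x2 * r) * x1 := by ring
        exact Nat.lt_of_mul_lt_mul_right step
      -- solution 1 at p must be E+ (y1*s = x1*r and z1*t > x1*r)
      have h1pe : y1 * s = x1 * r := by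
        by_contra h1pe
        have hB1p : z1 * t = y1 * s := T1p.2.1 (lt_of_le_of_ne h1p h1pe)
        have hyz12 : y1 * z2 = y2 * z1 := by
          have step : t * (y1 * z2) = t * (y2 * z1) := by
            calc t * (y1 * z2) = y1 * (z2 * t) := by ring
            _ = y1 * (y2 * s) := by rw [hB2p]
            _ = y2 * (y1 * s) := by ring
            _ = y2 * (z1 * t) := by rw [hB1p]
            _ = t * (y2 * z1) := by ring
          exact Nat.eq_of_mul_eq_mul_left htpos step
        have hxz12 : x1 * z2 = x2 * z1 := by
          have step : t' * (x1 * z2) = t' * (x2 * z1) := by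
            calc t' * (x1 * z2) = x1 * (z2 * t') := by ring
            _ = x1 * (x2 * r') := by rw [hA2q]
            _ = x2 * (x1 * r') := by ring
            _ = x2 * (z1 * t') := by rw [hA1q]
            _ = t' * (x2 * z1) := by ring
          exact Nat.eq_of_mul_eq_mul_left ht'pos step
        have hxy12 : x1 * y2 = x2 * y1 := by
          have step : (z1 * z2) * (x1 * y2) = (z1 * z2) * (x2 * y1) := by
            calc (z1 * z2) * (x1 * y2) = (x1 * z2) * (y2 * z1) := by ring
            _ = (x2 * z1) * (y1 * z2) := by rw [hxz12, hyz12]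
            _ = (z1 * z2) * (x2 * y1) := by ring
          exact Nat.eq_of_mul_eq_mul_left (by positivity) step
        exact hab hxy12
      have hgt1 : x1 * r < z1 * t := by
        have hge : x1 * r ≤ z1 * t := T1p.2.2 h1pe.symm
        rcases lt_or_eq_of_le hge with h | h
        · exact h
        · exact absurd h.symm hne1
      -- solution 3 at q must be E+ (x3*r' = y3*s' and z3*t' > y3*s')
      have h3qe : x3 * r' = y3 * s' := by
        by_contra h3qe
        have hA3q : z3 * t' = x3 * r' := T3q.1 (lt_of_le_of_ne h3q h3qe)
        have hxz23 : x2 * z3 = x3 * z2 := by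
          have step : t' * (x2 * z3) = t' * (x3 * z2) := by
            calc t' * (x2 * z3) = x2 * (z3 * t') := by ring
            _ = x2 * (x3 * r') := by rw [hA3q]
            _ = x3 * (x2 * r') := by ring
            _ = x3 * (z2 * t') := by rw [hA2q]
            _ = t' * (x3 * z2) := by ring
          exact Nat.eq_of_mul_eq_mul_left ht'pos step
        have hyz23 : y2 * z3 = y3 * z2 := by
          have step : t * (y2 * z3) = t * (y3 * z2) := by
            calc t * (y2 * z3) = y2 * (z3 * t) := by ring
            _ = y2 * (y3 * s) := by rw [hB3p]
            _ = y3 * (y2 * s) := by ring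
            _ = y3 * (z2 * t) := by rw [hB2p]
            _ = t * (y3 * z2) := by ring
          exact Nat.eq_of_mul_eq_mul_left htpos step
        have hxy23 : x2 * y3 = x3 * y2 := by
          have step : (z2 * z3) * (x2 * y3) = (z2 * z3) * (x3 * y2) := by
            calc (z2 * z3) * (x2 * y3) = (x2 * z3) * (y3 * z2) := by ring
            _ = (x3 * z2) * (y2 * z3) := by rw [hxz23, hyz23]
            _ = (z2 * z3) * (x3 * y2) := by ring
          exact Nat.eq_of_mul_eq_mul_left (by positivity) step
        exact hbc hxy23
      have hgt3 : y3 * s' < z3 * t' := by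
        have hge : x3 * r' ≤ z3 * t' := T3q.2.2 h3qe
        rcases lt_or_eq_of_le (h3qe ▸ hge) with h | h
        · exact h
        · exact absurd h.symm hne3
      -- final numeric contradiction
      have i1 : r * t' < t * r' := by
        have step : (r * t') * x1 < (t * r') * x1 := by
          calc (r * t') * x1 = t' * (x1 * r) := by ring
          _ < t' * (z1 * t) := Nat.mul_lt_mul_of_le_of_lt (le_refl t') hgt1 ht'pos
          _ = t * (z1 * t') := by ring
          _ = t * (x1 * r') := by rw [hA1q]
          _ = (t * r') * x1 := by ring
        exact Nat.lt_of_mul_lt_mul_right step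
      have i2 : t * s' < t' * s := by
        have step : (t * s') * y3 < (t' * s) * y3 := by
          calc (t * s') * y3 = t * (y3 * s') := by ring
          _ < t * (z3 * t') := Nat.mul_lt_mul_of_le_of_lt (le_refl t) hgt3 htpos
          _ = t' * (z3 * t) := by ring
          _ = t' * (y3 * s) := by rw [hB3p]
          _ = (t' * s) * y3 := by ring
        exact Nat.lt_of_mul_lt_mul_right step
      have i3 : s * r' < r * s' := by
        have step : (s * r') * (y1 * y3) < (r * s') * (y1 * y3) := by
          calc (s * r') * (y1 * y3) = (y1 * s) * (r' * y3) := by ring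
          _ = (x1 * r) * (r' * y3) := by rw [h1pe]
          _ = (r * r') * (x1 * y3) := by ring
          _ < (r * r') * (x3 * y1) :=
              Nat.mul_lt_mul_of_le_of_lt (le_refl (r * r')) hAC (by positivity)
          _ = (x3 * r') * (r * y1) := by ring
          _ = (y3 * s') * (r * y1) := by rw [h3qe]
          _ = (r * s') * (y1 * y3) := by ring
        exact Nat.lt_of_mul_lt_mul_right step
      have i4 : (r * t') * (t * s') < (t * r') * (t' * s) :=
        Nat.mul_lt_mul'' i1 i2
      have i5 : (t * t') * (r * s') < (t * t') * (s * r') := by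
        calc (t * t') * (r * s') = (r * t') * (t * s') := by ring
        _ < (t * r') * (t' * s) := i4
        _ = (t * t') * (s * r') := by ring
      have i6 : r * s' < s * r' := Nat.lt_of_mul_lt_mul_left i5
      omega

lemma stmt2_ratio_trans {x1 y1 x2 y2 x3 y3 : ℕ} (hy2 : 0 < y2)
    (h12 : x1 * y2 ≤ x2 * y1) (h23 : x2 * y3 ≤ x3 * y2) : x1 * y3 ≤ x3 * y1 := by
  have step : (x1 * y3) * y2 ≤ (x3 * y1) * y2 := by
    calc (x1 * y3) * y2 = (x1 * y2) * y3 := by ring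
    _ ≤ (x2 * y1) * y3 := Nat.mul_le_mul_right _ h12
    _ = (x2 * y3) * y1 := by ring
    _ ≤ (x3 * y2) * y1 := Nat.mul_le_mul_right _ h23
    _ = (x3 * y1) * y2 := by ring
  exact Nat.le_of_mul_le_mul_right step hy2

lemma stmt2_all_eq_parity {x1 y1 x2 y2 x3 y3 : ℕ}
    (h12 : x1 * y2 = x2 * y1) (h13 : x1 * y3 = x3 * y1) (h23 : x2 * y3 = x3 * y2)
    (d12 : (x1 % 2, y1 % 2) ≠ (x2 % 2, y2 % 2))
    (d13 : (x1 % 2, y1 % 2) ≠ (x3 % 2, y3 % 2))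
    (d23 : (x2 % 2, y2 % 2) ≠ (x3 % 2, y3 % 2)) : False := by
  have m12 : (x1 % 2) * (y2 % 2) % 2 = (x2 % 2) * (y1 % 2) % 2 := by
    rw [← Nat.mul_mod, ← Nat.mul_mod, h12]
  have m13 : (x1 % 2) * (y3 % 2) % 2 = (x3 % 2) * (y1 % 2) % 2 := by
    rw [← Nat.mul_mod, ← Nat.mul_mod, h13]
  have m23 : (x2 % 2) * (y3 % 2) % 2 = (x3 % 2) * (y2 % 2) % 2 := by
    rw [← Nat.mul_mod, ← Nat.mul_mod, h23]
  rcases Nat.mod_two_eq_zero_or_one x1 with a1 | a1 <;>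
  rcases Nat.mod_two_eq_zero_or_one y1 with b1 | b1 <;>
  rcases Nat.mod_two_eq_zero_or_one x2 with a2 | a2 <;>
  rcases Nat.mod_two_eq_zero_or_one y2 with b2 | b2 <;>
  rcases Nat.mod_two_eq_zero_or_one x3 with a3 | a3 <;>
  rcases Nat.mod_two_eq_zero_or_one y3 with b3 | b3 <;>
  simp_all

/-- Branch 2: every prime of `c` divides both `a` and `b`. -/
lemma stmt2_branch2 {a b c : ℕ} (ha : 0 < a) (hb : 0 < b) (hc2 : 2 ≤ c)
    {x1 y1 z1 x2 y2 z2 x3 y3 z3 : ℕ}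
    (hx1 : 0 < x1) (hy1 : 0 < y1) (hz1 : 0 < z1)
    (hx2 : 0 < x2) (hy2 : 0 < y2) (hz2 : 0 < z2)
    (hx3 : 0 < x3) (hy3 : 0 < y3) (hz3 : 0 < z3)
    (e1 : a ^ x1 + b ^ y1 = c ^ z1) (e2 : a ^ x2 + b ^ y2 = c ^ z2)
    (e3 : a ^ x3 + b ^ y3 = c ^ z3)
    (hdeg : ∀ p : ℕ, p.Prime → p ∣ c → p ∣ a ∧ p ∣ b)
    (d12 : (x1 % 2, y1 % 2) ≠ (x2 % 2, y2 % 2))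
    (d13 : (x1 % 2, y1 % 2) ≠ (x3 % 2, y3 % 2))
    (d23 : (x2 % 2, y2 % 2) ≠ (x3 % 2, y3 % 2)) : False := by
  have n12 : (x1, y1, z1) ≠ (x2, y2, z2) := by
    intro h
    exact d12 (by
      rw [show x1 = x2 from congrArg (fun w => w.1) h,
        show y1 = y2 from congrArg (fun w => w.2.1) h])
  have n13 : (x1, y1, z1) ≠ (x3, y3, z3) := by
    intro h
    exact d13 (by
      rw [show x1 = x3 from congrArg (fun w => w.1) h,
        show y1 = y3 from congrArg (fun w => w.2.1) h])
  have n23 : (x2, y2, z2) ≠ (x3, y3, z3) := by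
    intro h
    exact d23 (by
      rw [show x2 = x3 from congrArg (fun w => w.1) h,
        show y2 = y3 from congrArg (fun w => w.2.1) h])
  rcases le_total (x1 * y2) (x2 * y1) with h12 | h12 <;>
  rcases le_total (x1 * y3) (x3 * y1) with h13 | h13 <;>
  rcases le_total (x2 * y3) (x3 * y2) with h23 | h23
  · -- order 1 ≤ 2 ≤ 3
    by_cases heq : x1 * y3 = x3 * y1
    · have e12 : x1 * y2 = x2 * y1 :=
        le_antisymm h12 (stmt2_ratio_trans hy3 h23 heq.ge)
      have e23 : x2 * y3 = x3 * y2 :=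
        le_antisymm h23 (stmt2_ratio_trans hy1 heq.ge h12)
      exact stmt2_all_eq_parity e12 heq e23 d12 d13 d23
    · exact stmt2_core ha hb hc2 hx1 hy1 hz1 hx2 hy2 hz2 hx3 hy3 hz3 e1 e2 e3 hdeg
        h12 h23 (lt_of_le_of_ne h13 heq) n12 n23
  · -- 1 ≤ 2, 1 ≤ 3, 3 ≤ 2 : order 1 ≤ 3 ≤ 2
    by_cases heq : x1 * y2 = x2 * y1
    · have e13 : x1 * y3 = x3 * y1 :=
        le_antisymm h13 (stmt2_ratio_trans hy2 h23 heq.ge)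
      have e23 : x2 * y3 = x3 * y2 :=
        le_antisymm (stmt2_ratio_trans hy1 heq.ge h13) h23
      exact stmt2_all_eq_parity heq e13 e23 d12 d13 d23
    · exact stmt2_core ha hb hc2 hx1 hy1 hz1 hx3 hy3 hz3 hx2 hy2 hz2 e1 e3 e2 hdeg
        h13 h23 (lt_of_le_of_ne h12 heq) n13 n23.symm
  · -- 1 ≤ 2, 3 ≤ 1, 2 ≤ 3 : cycle, all equal
    have e12 : x1 * y2 = x2 * y1 :=
      le_antisymm h12 (stmt2_ratio_trans hy3 h23 h13)
    have e13 : x1 * y3 = x3 * y1 :=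
      le_antisymm (stmt2_ratio_trans hy2 h12 h23) h13
    have e23 : x2 * y3 = x3 * y2 :=
      le_antisymm h23 (stmt2_ratio_trans hy1 h13 h12)
    exact stmt2_all_eq_parity e12 e13 e23 d12 d13 d23
  · -- 1 ≤ 2, 3 ≤ 1, 3 ≤ 2 : order 3 ≤ 1 ≤ 2
    by_cases heq : x3 * y2 = x2 * y3
    · have e12 : x1 * y2 = x2 * y1 :=
        le_antisymm h12 (stmt2_ratio_trans hy3 heq.ge h13)
      have e13 : x1 * y3 = x3 * y1 :=
        le_antisymm (stmt2_ratio_trans hy2 h12 heq.ge) h13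
      exact stmt2_all_eq_parity e12 e13 heq.symm d12 d13 d23
    · exact stmt2_core ha hb hc2 hx3 hy3 hz3 hx1 hy1 hz1 hx2 hy2 hz2 e3 e1 e2 hdeg
        h13 h12 (lt_of_le_of_ne h23 heq) n13.symm n12
  · -- 2 ≤ 1, 1 ≤ 3, 2 ≤ 3 : order 2 ≤ 1 ≤ 3
    by_cases heq : x2 * y3 = x3 * y2
    · have e12 : x2 * y1 = x1 * y2 :=
        le_antisymm h12 (stmt2_ratio_trans hy3 h13 heq.ge)
      have e13 : x1 * y3 = x3 * y1 :=
        le_antisymm h13 (stmt2_ratio_trans hy2 heq.ge h12)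
      exact stmt2_all_eq_parity e12.symm e13 heq d12 d13 d23
    · exact stmt2_core ha hb hc2 hx2 hy2 hz2 hx1 hy1 hz1 hx3 hy3 hz3 e2 e1 e3 hdeg
        h12 h13 (lt_of_le_of_ne h23 heq) n12.symm n13
  · -- 2 ≤ 1, 1 ≤ 3, 3 ≤ 2 : cycle 1 ≤ 3 ≤ 2 ≤ 1, all equal
    have e13 : x1 * y3 = x3 * y1 :=
      le_antisymm h13 (stmt2_ratio_trans hy2 h23 h12)
    have e23 : x3 * y2 = x2 * y3 :=
      le_antisymm h23 (stmt2_ratio_trans hy1 h12 h13)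
    have e12 : x2 * y1 = x1 * y2 :=
      le_antisymm h12 (stmt2_ratio_trans hy3 h13 h23)
    exact stmt2_all_eq_parity e12.symm e13 e23.symm d12 d13 d23
  · -- 2 ≤ 1, 3 ≤ 1, 2 ≤ 3 : order 2 ≤ 3 ≤ 1
    by_cases heq : x2 * y1 = x1 * y2
    · have e13 : x3 * y1 = x1 * y3 :=
        le_antisymm h13 (stmt2_ratio_trans hy2 heq.ge h23)
      have e23 : x2 * y3 = x3 * y2 :=
        le_antisymm h23 (stmt2_ratio_trans hy1 h13 heq.ge)
      exact stmt2_all_eq_parity heq.symm e13.symm e23 d12 d13 d23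
    · exact stmt2_core ha hb hc2 hx2 hy2 hz2 hx3 hy3 hz3 hx1 hy1 hz1 e2 e3 e1 hdeg
        h23 h13 (lt_of_le_of_ne h12 heq) n23 n13.symm
  · -- 2 ≤ 1, 3 ≤ 1, 3 ≤ 2 : order 3 ≤ 2 ≤ 1
    by_cases heq : x3 * y1 = x1 * y3
    · have e23 : x3 * y2 = x2 * y3 :=
        le_antisymm h23 (stmt2_ratio_trans hy1 h12 heq.ge)
      have e12 : x2 * y1 = x1 * y2 :=
        le_antisymm h12 (stmt2_ratio_trans hy3 heq.ge h23)
      exact stmt2_all_eq_parity e12.symm heq.symm e23.symm d12 d13 d23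
    · exact stmt2_core ha hb hc2 hx3 hy3 hz3 hx2 hy2 hz2 hx1 hy1 hz1 e3 e2 e1 hdeg
        h23 h12 (lt_of_le_of_ne h13 heq) n23.symm n12.symm

theorem stmt2 (a b c : ℕ) (ha : 0 < a) (hb : 0 < b) (hc : 0 < c) (hodd : Odd c) :
    Set.ncard {q : ℕ × ℕ | ∃ x y z : ℕ, 0 < x ∧ 0 < y ∧ 0 < z ∧
      a ^ x + b ^ y = c ^ z ∧ q = (x % 2, y % 2)} ≤ 2 := by
  set S : Set (ℕ × ℕ) := {q : ℕ × ℕ | ∃ x y z : ℕ, 0 < x ∧ 0 < y ∧ 0 < z ∧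
      a ^ x + b ^ y = c ^ z ∧ q = (x % 2, y % 2)} with hSdef
  have hfin : S.Finite := by
    apply Set.Finite.subset (Finset.finite_toSet ({(0,0),(0,1),(1,0),(1,1)} : Finset (ℕ × ℕ)))
    rintro ⟨u, v⟩ ⟨x, y, z, hx, hy, hz, he, hq⟩
    rw [hq]
    rcases Nat.mod_two_eq_zero_or_one x with h1 | h1 <;>
    rcases Nat.mod_two_eq_zero_or_one y with h2 | h2 <;>
    simp [h1, h2]
  by_contra hcon
  push_neg at hcon
  obtain ⟨q1, hq1, q2, hq2, q3, hq3, h12, h13, h23⟩ := (Set.two_lt_ncard hfin).mp hcon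
  obtain ⟨x1, y1, z1, hx1, hy1, hz1, e1, hq1e⟩ := hq1
  obtain ⟨x2, y2, z2, hx2, hy2, hz2, e2, hq2e⟩ := hq2
  obtain ⟨x3, y3, z3, hx3, hy3, hz3, e3, hq3e⟩ := hq3
  have d12 : (x1 % 2, y1 % 2) ≠ (x2 % 2, y2 % 2) := by rw [← hq1e, ← hq2e]; exact h12
  have d13 : (x1 % 2, y1 % 2) ≠ (x3 % 2, y3 % 2) := by rw [← hq1e, ← hq3e]; exact h13
  have d23 : (x2 % 2, y2 % 2) ≠ (x3 % 2, y3 % 2) := by rw [← hq2e, ← hq3e]; exact h23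
  by_cases hex : ∃ p : ℕ, p.Prime ∧ p ∣ c ∧ ¬ (p ∣ a * b)
  · obtain ⟨p, hp, hpc, hpab⟩ := hex
    have hpa : ¬ p ∣ a := fun h => hpab (Dvd.dvd.mul_right h b)
    have hpb : ¬ p ∣ b := fun h => hpab (Dvd.dvd.mul_left h a)
    have hp2 : p ≠ 2 := by
      rintro rfl
      obtain ⟨k, hk⟩ := hodd
      obtain ⟨m, hm⟩ := hpc
      omega
    exact stmt2_branch1 hp hp2 hpc hpa hpb hz1 hz2 hz3 e1 e2 e3 d12 d13 d23
  · push_neg at hex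
    have hdeg : ∀ p : ℕ, p.Prime → p ∣ c → p ∣ a ∧ p ∣ b := by
      intro p hp hpc
      have hab := hex p hp hpc
      have hpc' : p ∣ c ^ z1 := dvd_pow hpc hz1.ne'
      rcases (Nat.Prime.dvd_mul hp).mp hab with h | h
      · refine ⟨h, ?_⟩
        have hpa' : p ∣ a ^ x1 := dvd_pow h hx1.ne'
        have hpb' : p ∣ b ^ y1 := by
          have hb' : b ^ y1 = c ^ z1 - a ^ x1 := by omega
          rw [hb']
          exact Nat.dvd_sub hpc' hpa'
        exact hp.dvd_of_dvd_pow hpb'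
      · refine ⟨?_, h⟩
        have hpb' : p ∣ b ^ y1 := dvd_pow h hy1.ne'
        have hpa' : p ∣ a ^ x1 := by
          have ha' : a ^ x1 = c ^ z1 - b ^ y1 := by omega
          rw [ha']
          exact Nat.dvd_sub hpc' hpb'
        exact hp.dvd_of_dvd_pow hpa'
    have hc2 : 2 ≤ c := by
      rcases Nat.lt_or_ge c 2 with h | h
      · have hpa : 0 < a ^ x1 := by positivity
        have hpb : 0 < b ^ y1 := by positivity
        interval_cases c
        rw [one_pow] at e1; omega
      · exact h
    exact stmt2_branch2 ha hb hc2 hx1 hy1 hz1 hx2 hy2 hz2 hx3 hy3 hz3 e1 e2 e3 hdeg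
      d12 d13 d23
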